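/- arXiv:1612.03292 — 2 statements merged into one kernel-verified Lean document; each statement's English description precedes it below -/
import Mathlib

section
/- Equivalent form of Schröder's formula: for every n ≥ 1, G_n = (-1)^{n+1} ∫_1^∞ dt / ((log²(t-1) + π²) t^n). -/
open MeasureTheory Real

noncomputable def G (n : ℕ) : ℝ :=
  (n.factorial : ℝ)⁻¹ * ∫ x in (0:ℝ)..1, ∏ k ∈ Finset.range n, (x - k)

/-!
For `0 < s < 1`, the reflection formula and the Beta integral give
`∏_{k<n} (s - k) = (-1)^(n+1) (n!/π) sin(πs) ∫₀¹ v^s (1-v)^(n-s-1) dv`.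
Integrating over `s` and swapping the two integrals (the integrand is nonnegative), the inner
integral is elementary: with `w = v / (1 - v)`, `∫₀¹ w^s sin(πs) ds = π (1 + w) / (log² w + π²)`.
The substitution `t = 1 / (1 - v)` turns the remaining integral over `(0, 1)` into the one over
`(1, ∞)`.
-/

open Set

theorem integral_rpow_mul_one_sub_rpow {a b : ℝ} (ha : 0 < a) (hb : 0 < b) :
    ∫ v in (0 : ℝ)..1, v ^ (a - 1) * (1 - v) ^ (b - 1) = Gamma a * Gamma b / Gamma (a + b) := by
  apply Complex.ofReal_injective
  push_cast
  rw [← Complex.Gamma_ofReal, ← Complex.Gamma_ofReal, ← Complex.Gamma_ofReal, Complex.ofReal_add,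
    ← Complex.betaIntegral_eq_Gamma_mul_div _ _ (by simpa) (by simpa), Complex.betaIntegral,
    ← intervalIntegral.integral_ofReal]
  refine intervalIntegral.integral_congr fun v hv => ?_
  rw [uIcc_of_le zero_le_one] at hv
  simp only [Complex.ofReal_mul, Complex.ofReal_cpow hv.1, Complex.ofReal_cpow (sub_nonneg.2 hv.2)]
  push_cast
  rfl

theorem prod_range_sub_natCast_mul_Gamma (n : ℕ) {s : ℝ} (hs : ∀ k < n, s ≠ k) :
    (∏ k ∈ Finset.range n, (s - k)) * Gamma (s - n + 1) = Gamma (s + 1) := by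
  induction n with
  | zero => simp
  | succ n ih =>
    have hsn : s - n ≠ 0 := sub_ne_zero.2 (hs n n.lt_succ_self)
    rw [Finset.prod_range_succ, mul_assoc, Nat.cast_succ, sub_add_eq_sub_sub, sub_add_cancel,
      ← Gamma_add_one hsn, ih fun k hk => hs k (hk.trans n.lt_succ_self)]

theorem pi_mul_prod_range_sub_natCast (n : ℕ) {s : ℝ} (hs : ∀ m : ℤ, s ≠ m) :
    π * ∏ k ∈ Finset.range n, (s - k) =
      (-1) ^ (n + 1) * sin (π * s) * Gamma (s + 1) * Gamma (n - s) := by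
  have hsin : sin (π * (s - n + 1)) ≠ 0 := by
    rw [Ne, sin_eq_zero_iff]
    rintro ⟨m, hm⟩
    exact hs (m + n - 1) (by push_cast; nlinarith [pi_pos])
  have hrefl := Gamma_mul_Gamma_one_sub (s - n + 1)
  rw [show 1 - (s - n + 1) = n - s by ring] at hrefl
  have hsign : sin (π * (s - n + 1)) = (-1) ^ (n + 1) * sin (π * s) := by
    rw [show π * (s - n + 1) = π * s - n * π + π by ring, sin_add_pi, sin_sub_nat_mul_pi, pow_succ]
    ring
  rw [← prod_range_sub_natCast_mul_Gamma n fun k _ => mod_cast hs k, ← hsign]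
  rw [eq_div_iff hsin] at hrefl
  linear_combination -(∏ k ∈ Finset.range n, (s - k)) * hrefl

theorem integral_exp_mul_mul_sin_pi_mul (L : ℝ) :
    ∫ s in (0 : ℝ)..1, exp (s * L) * sin (π * s) = (exp L + 1) * π / (L ^ 2 + π ^ 2) := by
  have hD : L ^ 2 + π ^ 2 ≠ 0 := by positivity
  have hderiv : ∀ s ∈ uIcc (0 : ℝ) 1, HasDerivAt
      (fun s => exp (s * L) * (L * sin (π * s) - π * cos (π * s)) / (L ^ 2 + π ^ 2))
      (exp (s * L) * sin (π * s)) s := by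
    intro s _
    have hlin : HasDerivAt (fun s : ℝ => π * s) π s := by
      simpa using (hasDerivAt_id s).const_mul π
    have hexp : HasDerivAt (fun s : ℝ => exp (s * L)) (exp (s * L) * L) s := by
      simpa using ((hasDerivAt_id s).mul_const L).exp
    refine ((hexp.mul ((hlin.sin.const_mul L).sub (hlin.cos.const_mul π))).div_const _
      ).congr_deriv ?_
    simp only [Pi.sub_apply]
    field_simp
    ring
  rw [intervalIntegral.integral_eq_sub_of_hasDerivAt hderiv (Continuous.intervalIntegrable
    (by fun_prop) _ _)]
  simp only [one_mul, zero_mul, exp_zero, mul_one, mul_zero, sin_pi, cos_pi, sin_zero, cos_zero]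
  field_simp
  ring

noncomputable def schroderKernel (n : ℕ) (s v : ℝ) : ℝ :=
  sin (π * s) * (v ^ s * (1 - v) ^ ((n : ℝ) - s - 1))

section schroderKernel

variable {n : ℕ}

theorem schroderKernel_nonneg {s v : ℝ} (hs : s ∈ Icc 0 1) (hv : v ∈ Icc 0 1) :
    0 ≤ schroderKernel n s v :=
  mul_nonneg
    (sin_nonneg_of_nonneg_of_le_pi (by nlinarith [pi_pos, hs.1]) (by nlinarith [pi_pos, hs.2]))
    (mul_nonneg (rpow_nonneg hv.1 _) (rpow_nonneg (sub_nonneg.2 hv.2) _))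

theorem integral_schroderKernel_right (hn : 1 ≤ n) {s : ℝ} (hs0 : 0 < s) (hs1 : s < 1) :
    ∫ v in (0 : ℝ)..1, schroderKernel n s v =
      (-1) ^ (n + 1) * π / n.factorial * ∏ k ∈ Finset.range n, (s - k) := by
  have hn' : (1 : ℝ) ≤ n := mod_cast hn
  have hbeta := integral_rpow_mul_one_sub_rpow (a := s + 1) (b := n - s) (by linarith) (by linarith)
  rw [add_sub_cancel_right, show s + 1 + (n - s) = n + 1 by ring, Gamma_nat_eq_factorial] at hbeta
  have hnonint : ∀ m : ℤ, s ≠ m := by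
    rintro m rfl
    have : (0 : ℤ) < m ∧ m < 1 := ⟨mod_cast hs0, mod_cast hs1⟩
    omega
  have hprod := pi_mul_prod_range_sub_natCast n hnonint
  have hsign : (-1 : ℝ) ^ (n + 1) * (-1) ^ (n + 1) = 1 := by rw [← mul_pow]; norm_num
  simp only [schroderKernel]
  rw [intervalIntegral.integral_const_mul, hbeta]
  field_simp
  linear_combination -(-1) ^ (n + 1) * hprod - sin (π * s) * Gamma (s + 1) * Gamma (n - s) * hsign

theorem integrableOn_schroderKernel_right {s : ℝ} (hs0 : 0 ≤ s) (hsn : s < n) :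
    IntegrableOn (schroderKernel n s) (Ioo 0 1) := by
  have hsing : IntervalIntegrable (fun v : ℝ => (1 - v) ^ ((n : ℝ) - s - 1)) volume 0 1 := by
    simpa using ((intervalIntegral.intervalIntegrable_rpow' (r := (n : ℝ) - s - 1)
      (by linarith) (a := 0) (b := 1)).comp_sub_left 1).symm
  have hreg : ContinuousOn (fun v : ℝ => sin (π * s) * v ^ s) (uIcc 0 1) :=
    (continuous_const.mul (continuous_id.rpow_const fun _ => Or.inr hs0)).continuousOn
  have hkernel :
      schroderKernel n s = fun v => sin (π * s) * v ^ s * (1 - v) ^ ((n : ℝ) - s - 1) := by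
    ext v
    rw [schroderKernel, mul_assoc]
  rw [hkernel]
  exact ((intervalIntegrable_iff_integrableOn_Ioc_of_le zero_le_one).1
    (hsing.continuousOn_mul hreg)).mono_set Ioo_subset_Ioc_self

theorem integral_schroderKernel_left {v : ℝ} (hv0 : 0 < v) (hv1 : v < 1) :
    ∫ s in (0 : ℝ)..1, schroderKernel n s v =
      π * (1 - v) ^ ((n : ℝ) - 2) / (log (v / (1 - v)) ^ 2 + π ^ 2) := by
  have h1v : 0 < 1 - v := by linarith
  have hw : 0 < v / (1 - v) := div_pos hv0 h1v
  have hkernel : ∀ s, schroderKernel n s v =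
      (1 - v) ^ ((n : ℝ) - 1) * (exp (s * log (v / (1 - v))) * sin (π * s)) := by
    intro s
    rw [schroderKernel, mul_comm s, ← rpow_def_of_pos hw, div_rpow hv0.le h1v.le,
      show (n : ℝ) - s - 1 = (n - 1) - s by ring, rpow_sub h1v]
    field_simp
  have hpow : (1 - v) ^ ((n : ℝ) - 1) = (1 - v) ^ ((n : ℝ) - 2) * (1 - v) := by
    rw [show (n : ℝ) - 1 = (n - 2) + 1 by ring, rpow_add_one h1v.ne']
  simp only [hkernel, intervalIntegral.integral_const_mul, integral_exp_mul_mul_sin_pi_mul,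
    exp_log hw, hpow]
  field_simp
  ring

theorem integrable_schroderKernel (hn : 1 ≤ n) :
    Integrable (Function.uncurry (schroderKernel n))
      ((volume.restrict (Ioo 0 1)).prod (volume.restrict (Ioo 0 1))) := by
  have hmeas : Measurable (Function.uncurry (schroderKernel n)) := by
    unfold schroderKernel
    fun_prop
  refine (integrable_prod_iff hmeas.aestronglyMeasurable).2 ⟨?_, ?_⟩
  · rw [ae_restrict_iff' measurableSet_Ioo]
    refine Filter.Eventually.of_forall fun s hs => integrableOn_schroderKernel_right hs.1.le ?_
    exact hs.2.trans_le (mod_cast hn)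
  · -- `∫ ‖k(s, ·)‖ = ∫ k(s, ·)` is a polynomial in `s`
    have hpoly : IntegrableOn
        (fun s : ℝ => (-1) ^ (n + 1) * π / n.factorial * ∏ k ∈ Finset.range n, (s - k)) (Ioo 0 1) :=
      (Continuous.integrableOn_Icc (by fun_prop)).mono_set Ioo_subset_Icc_self
    refine hpoly.congr ?_
    rw [Filter.EventuallyEq, ae_restrict_iff' measurableSet_Ioo]
    refine Filter.Eventually.of_forall fun s hs => ?_
    rw [← integral_schroderKernel_right hn hs.1 hs.2, intervalIntegral.integral_of_le zero_le_one,
      integral_Ioc_eq_integral_Ioo]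
    refine setIntegral_congr_fun measurableSet_Ioo fun v hv => ?_
    exact (norm_of_nonneg (schroderKernel_nonneg (Ioo_subset_Icc_self hs)
      (Ioo_subset_Icc_self hv))).symm

end schroderKernel

theorem integral_Ioi_one_eq_integral_Ioo {E : Type*} [NormedAddCommGroup E] [NormedSpace ℝ E]
    (f : ℝ → E) :
    ∫ t in Ioi 1, f t = ∫ v in Ioo 0 1, ((1 - v) ^ 2)⁻¹ • f (1 - v)⁻¹ := by
  have himage : (fun v : ℝ => (1 - v)⁻¹) '' Ioo 0 1 = Ioi 1 := by
    ext t
    constructor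
    · rintro ⟨v, ⟨hv0, hv1⟩, rfl⟩
      exact (one_lt_inv₀ (sub_pos.2 hv1)).2 (by linarith)
    · intro (ht : 1 < t)
      refine ⟨1 - t⁻¹, ⟨?_, ?_⟩, by simp⟩
      · linarith [inv_lt_one_of_one_lt₀ ht]
      · linarith [inv_pos.2 (zero_lt_one.trans ht)]
  have hderiv : ∀ v ∈ Ioo (0 : ℝ) 1,
      HasDerivWithinAt (fun v : ℝ => (1 - v)⁻¹) ((1 - v) ^ 2)⁻¹ (Ioo 0 1) v := by
    intro v hv
    have h : HasDerivAt (fun v : ℝ => (1 - v)⁻¹) ((1 - v) ^ 2)⁻¹ v :=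
      (((hasDerivAt_id v).const_sub 1).inv (sub_ne_zero.2 hv.2.ne')).congr_deriv (by simp)
    exact h.hasDerivWithinAt
  have hinj : InjOn (fun v : ℝ => (1 - v)⁻¹) (Ioo 0 1) := fun a _ b _ h => by
    simpa using inv_injective h
  rw [← himage, integral_image_eq_integral_abs_deriv_smul measurableSet_Ioo hderiv hinj]
  refine setIntegral_congr_fun measurableSet_Ioo fun v _ => ?_
  rw [abs_of_nonneg (by positivity)]

theorem schroder_integral' (n : ℕ) (hn : 1 ≤ n) :
    G n = (-1 : ℝ) ^ (n + 1) *
      ∫ t in Set.Ioi (1:ℝ), 1 / (((Real.log (t - 1)) ^ 2 + π ^ 2) * t ^ n) := by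
  have hIoo (f : ℝ → ℝ) : ∫ x in (0 : ℝ)..1, f x = ∫ x in Ioo 0 1, f x := by
    rw [intervalIntegral.integral_of_le zero_le_one, integral_Ioc_eq_integral_Ioo]
  have hprod : ∀ s ∈ Ioo (0 : ℝ) 1, ∏ k ∈ Finset.range n, (s - k) =
      (-1) ^ (n + 1) * n.factorial / π * ∫ v in Ioo 0 1, schroderKernel n s v := by
    intro s hs
    rw [← hIoo, integral_schroderKernel_right hn hs.1 hs.2]
    field_simp
    rw [← pow_mul, Even.neg_one_pow ⟨n + 1, by ring⟩, mul_one]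
  have hinner : ∀ v ∈ Ioo (0 : ℝ) 1, ∫ s in Ioo 0 1, schroderKernel n s v =
      π * (1 - v) ^ ((n : ℝ) - 2) / (log (v / (1 - v)) ^ 2 + π ^ 2) := fun v hv => by
    rw [← hIoo, integral_schroderKernel_left hv.1 hv.2]
  have hsubst : ∀ v ∈ Ioo (0 : ℝ) 1,
      ((1 - v) ^ 2)⁻¹ • (1 / ((log ((1 - v)⁻¹ - 1) ^ 2 + π ^ 2) * ((1 - v)⁻¹) ^ n)) =
        π⁻¹ * (π * (1 - v) ^ ((n : ℝ) - 2) / (log (v / (1 - v)) ^ 2 + π ^ 2)) := by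
    intro v ⟨hv0, hv1⟩
    have h1v : 0 < 1 - v := by linarith
    rw [show (1 - v)⁻¹ - 1 = v / (1 - v) by field_simp; ring, rpow_sub h1v, rpow_natCast,
      rpow_two, inv_pow, smul_eq_mul]
    field_simp
  rw [G, hIoo, setIntegral_congr_fun measurableSet_Ioo hprod, integral_const_mul,
    integral_integral_swap (integrable_schroderKernel hn),
    setIntegral_congr_fun measurableSet_Ioo hinner, integral_Ioi_one_eq_integral_Ioo,
    setIntegral_congr_fun measurableSet_Ioo hsubst, integral_const_mul]
  field_simp
end

section
/- Lower bound: for every n ≥ 2, |G_n| ≥ ∫_1^2 du/((log² u + π²)(u+1)^n) ≥ (1/((log 2)² + π²)) · (1/(n-1)) · (2^{1-n} − 3^{1-n}). -/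
/-!
The first inequality is proved by squeezing `1 / (6 n (n - 1))` between its two sides, without
Schröder's formula. On `[0, 1]` the product `∏_{k<n} (x - k)` has constant sign `(-1)^(n-1)` and
absolute value `x ∏_{1≤k<n} (k - x) ≥ x (1 - x) (n - 2)!`, so `|G n| ≥ (n - 2)! / (6 n!)`.
On `[1, 2]` the integrand is at most `1 / (π² 2^n)`, and `6 n (n - 1) ≤ 6 · 2^n ≤ π² 2^n`.
For the second inequality, `log² u ≤ log² 2` on `[1, 2]` and `(u + 1)^(-n)` integrates exactly.
-/

open MeasureTheory Real

section

open Finset Nat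

theorem prod_range_succ_sub_natCast {R : Type*} [CommRing R] (n : ℕ) (x : R) :
    ∏ k ∈ range (n + 1), (x - k) = (-1) ^ n * (x * ∏ k ∈ range n, ((k : R) + 1 - x)) := by
  have hneg : ∏ k ∈ range n, (x - (k + 1 : ℕ)) = ∏ k ∈ range n, (-1 * ((k : R) + 1 - x)) :=
    prod_congr rfl fun k _ => by push_cast; ring
  rw [prod_range_succ', hneg, prod_mul_distrib, prod_const, card_range]
  push_cast
  ring

theorem one_sub_mul_factorial_le_prod {x : ℝ} (hx : x ≤ 1) (n : ℕ) :
    (1 - x) * n ! ≤ ∏ k ∈ range (n + 1), ((k : ℝ) + 1 - x) := by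
  have hfac : (n ! : ℝ) ≤ ∏ k ∈ range n, ((k : ℝ) + 1 + 1 - x) := by
    rw [← prod_range_add_one_eq_factorial, Nat.cast_prod]
    push_cast
    exact prod_le_prod (fun k _ => by positivity) fun k _ => by linarith
  rw [prod_range_succ', mul_comm]
  push_cast
  rw [zero_add]
  exact mul_le_mul_of_nonneg_right hfac (by linarith)

theorem mul_one_sub_mul_factorial_le_prod {x : ℝ} (hx₀ : 0 ≤ x) (hx₁ : x ≤ 1) (n : ℕ) :
    x * (1 - x) * n ! ≤ (-1) ^ (n + 1) * ∏ k ∈ range (n + 2), (x - k) := by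
  rw [prod_range_succ_sub_natCast, ← mul_assoc, ← pow_add, Even.neg_one_pow ⟨_, rfl⟩, one_mul,
    mul_assoc]
  exact mul_le_mul_of_nonneg_left (one_sub_mul_factorial_le_prod hx₁ n) hx₀

theorem integral_mul_one_sub : ∫ x in (0 : ℝ)..1, x * (1 - x) = 1 / 6 := by
  have hpoly : ∀ x : ℝ, x * (1 - x) = x - x ^ 2 := fun x => by ring
  simp_rw [hpoly]
  rw [intervalIntegral.integral_sub intervalIntegral.intervalIntegrable_id (by simp)]
  norm_num [integral_id, integral_pow]

theorem factorial_div_six_le_abs_integral_prod (n : ℕ) :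
    (n ! : ℝ) / 6 ≤ |∫ x in (0 : ℝ)..1, ∏ k ∈ range (n + 2), (x - k)| := by
  have hmono : ∫ x in (0 : ℝ)..1, x * (1 - x) * n ! ≤
      ∫ x in (0 : ℝ)..1, (-1) ^ (n + 1) * ∏ k ∈ range (n + 2), (x - k) :=
    intervalIntegral.integral_mono_on zero_le_one
      (Continuous.intervalIntegrable (by fun_prop) _ _)
      (Continuous.intervalIntegrable (by fun_prop) _ _)
      fun x hx => mul_one_sub_mul_factorial_le_prod hx.1 hx.2 n
  rw [intervalIntegral.integral_mul_const, integral_mul_one_sub,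
    intervalIntegral.integral_const_mul] at hmono
  calc (n ! : ℝ) / 6 ≤ _ := by linarith
    _ ≤ |(-1) ^ (n + 1) * ∫ x in (0 : ℝ)..1, ∏ k ∈ range (n + 2), (x - k)| := le_abs_self _
    _ = _ := by rw [abs_mul, abs_pow, abs_neg, abs_one, one_pow, one_mul]

theorem one_div_le_abs_G {n : ℕ} (hn : 2 ≤ n) : 1 / (6 * n * (n - 1)) ≤ |G n| := by
  obtain ⟨m, rfl⟩ := Nat.exists_eq_add_of_le' hn
  have hfac : ((m + 2) ! : ℝ) = (m + 2) * (m + 1) * m ! := by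
    push_cast [Nat.factorial_succ]; ring
  rw [G, abs_mul, abs_inv, Nat.abs_cast, hfac]
  have hsub : ((m + 2 : ℕ) : ℝ) - 1 = m + 1 := by push_cast; ring
  calc 1 / (6 * ((m + 2 : ℕ) : ℝ) * ((m + 2 : ℕ) - 1))
        = ((m + 2) * (m + 1) * m ! : ℝ)⁻¹ * (m ! / 6) := by
        rw [hsub]; push_cast; field_simp
    _ ≤ _ := by gcongr; exact factorial_div_six_le_abs_integral_prod m

end

theorem natCast_mul_sub_one_le_two_pow (n : ℕ) : (n : ℝ) * (n - 1) ≤ 2 ^ n := by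
  cases n with
  | zero => simp
  | succ m =>
    have hchoose := Nat.choose_succ_le_two_pow m 2
    rw [← Nat.cast_le (α := ℝ), Nat.cast_choose_two, Nat.cast_pow, Nat.cast_ofNat] at hchoose
    rw [pow_succ]
    linarith

theorem six_mul_mul_sub_one_le_pi_sq_mul_two_pow (n : ℕ) :
    6 * (n : ℝ) * (n - 1) ≤ π ^ 2 * 2 ^ n := by
  have hpi : 6 ≤ π ^ 2 := by nlinarith [pi_gt_three]
  calc 6 * (n : ℝ) * (n - 1) ≤ 6 * 2 ^ n := by
        rw [mul_assoc]; gcongr; exact natCast_mul_sub_one_le_two_pow n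
    _ ≤ π ^ 2 * 2 ^ n := by gcongr

noncomputable def schroederIntegrand (n : ℕ) (u : ℝ) : ℝ :=
  1 / ((log u ^ 2 + π ^ 2) * (u + 1) ^ n)

section

open Set

variable (n : ℕ)

theorem continuousOn_schroederIntegrand : ContinuousOn (schroederIntegrand n) (Ioi 0) := by
  refine continuousOn_const.div (ContinuousOn.mul ?_ (by fun_prop)) fun u hu => ?_
  · exact (continuousOn_log.mono fun u hu => ne_of_gt hu).pow 2 |>.add continuousOn_const
  · have : 0 < u := hu
    positivity

theorem intervalIntegrable_schroederIntegrand :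
    IntervalIntegrable (schroederIntegrand n) volume 1 2 :=
  (continuousOn_schroederIntegrand n).mono (by
    rw [uIcc_of_le one_le_two, Icc_subset_Ioi_iff one_le_two]; exact one_pos) |>.intervalIntegrable

theorem schroederIntegrand_le {u : ℝ} (hu : 1 ≤ u) :
    schroederIntegrand n u ≤ 1 / (π ^ 2 * 2 ^ n) := by
  have hlog : 0 ≤ log u := log_nonneg hu
  unfold schroederIntegrand
  gcongr
  · linarith [sq_nonneg (log u)]
  · linarith

theorem integral_schroederIntegrand_le :
    ∫ u in (1 : ℝ)..2, schroederIntegrand n u ≤ 1 / (π ^ 2 * 2 ^ n) := by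
  calc ∫ u in (1 : ℝ)..2, schroederIntegrand n u ≤ ∫ _ in (1 : ℝ)..2, 1 / (π ^ 2 * 2 ^ n) :=
        intervalIntegral.integral_mono_on one_le_two (intervalIntegrable_schroederIntegrand n)
          intervalIntegrable_const fun u hu => schroederIntegrand_le n hu.1
    _ = 1 / (π ^ 2 * 2 ^ n) := by norm_num

theorem inv_mul_zpow_le_schroederIntegrand {u : ℝ} (hu₁ : 1 ≤ u) (hu₂ : u ≤ 2) :
    (log 2 ^ 2 + π ^ 2)⁻¹ * (u + 1) ^ (-(n : ℤ)) ≤ schroederIntegrand n u := by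
  rw [schroederIntegrand, zpow_neg, zpow_natCast, ← mul_inv, one_div]
  gcongr
  exact log_nonneg hu₁

theorem integral_add_one_zpow_neg (hn : n ≠ 1) :
    ∫ u in (1 : ℝ)..2, (u + 1) ^ (-(n : ℤ)) =
      1 / ((n : ℝ) - 1) * ((2 : ℝ) ^ ((1 : ℤ) - n) - (3 : ℝ) ^ ((1 : ℤ) - n)) := by
  have hn' : (n : ℝ) - 1 ≠ 0 := sub_ne_zero.mpr (by exact_mod_cast hn)
  rw [intervalIntegral.integral_comp_add_right (fun v : ℝ => v ^ (-(n : ℤ))), integral_zpow]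
  · rw [neg_add_eq_sub]
    push_cast
    rw [show -(n : ℝ) + 1 = -((n : ℝ) - 1) by ring]
    field_simp
    norm_num
  · refine Or.inr ⟨by omega, ?_⟩
    norm_num

theorem integral_schroederIntegrand_ge (hn : n ≠ 1) :
    1 / (log 2 ^ 2 + π ^ 2) * (1 / ((n : ℝ) - 1)) *
        ((2 : ℝ) ^ ((1 : ℤ) - n) - (3 : ℝ) ^ ((1 : ℤ) - n)) ≤
      ∫ u in (1 : ℝ)..2, schroederIntegrand n u := by
  rw [one_div (log 2 ^ 2 + π ^ 2), mul_assoc, ← integral_add_one_zpow_neg n hn,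
    ← intervalIntegral.integral_const_mul]
  refine intervalIntegral.integral_mono_on one_le_two ?_ (intervalIntegrable_schroederIntegrand n)
    fun u hu => inv_mul_zpow_le_schroederIntegrand n hu.1 hu.2
  refine (continuousOn_const.mul ((continuousOn_id.add continuousOn_const).zpow₀ _
    fun u hu => Or.inl ?_)).intervalIntegrable
  rw [uIcc_of_le one_le_two] at hu
  exact (show (0 : ℝ) < u + 1 by linarith [hu.1]).ne'

end

theorem gregory_lower_bound (n : ℕ) (hn : 2 ≤ n) :
    |G n| ≥ (∫ u in (1:ℝ)..2, 1 / (((Real.log u) ^ 2 + π ^ 2) * (u + 1) ^ n)) ∧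
    (∫ u in (1:ℝ)..2, 1 / (((Real.log u) ^ 2 + π ^ 2) * (u + 1) ^ n))
      ≥ (1 / ((Real.log 2) ^ 2 + π ^ 2)) * (1 / ((n : ℝ) - 1)) *
        ((2 : ℝ) ^ ((1 : ℤ) - n) - (3 : ℝ) ^ ((1 : ℤ) - n)) := by
  refine ⟨?_, integral_schroederIntegrand_ge n (by omega)⟩
  have hpos : 0 < 6 * (n : ℝ) * (n - 1) := by
    have : (2 : ℝ) ≤ n := by exact_mod_cast hn
    nlinarith
  calc ∫ u in (1 : ℝ)..2, schroederIntegrand n u ≤ 1 / (π ^ 2 * 2 ^ n) :=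
        integral_schroederIntegrand_le n
    _ ≤ 1 / (6 * n * (n - 1)) :=
        one_div_le_one_div_of_le hpos (six_mul_mul_sub_one_le_pi_sq_mul_two_pow n)
    _ ≤ |G n| := one_div_le_abs_G hn
end
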